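/- For every dimension n ≥ 1 and positive integer ℓ, the function s ↦ A_ℓ(s)/s^{2ℓ}, defined for s ≠ 0, extends to a C^∞ function on all of ℝ, and for every i ∈ ℕ the i-th derivative of this extension is bounded on ℝ, i.e. sup_{s ∈ ℝ} |(d/ds)^i (A_ℓ(s)/s^{2ℓ})| < ∞. -/

import Mathlib

open MeasureTheory Set intervalIntegral Metric
open scoped Interval

/-- iterated derivatives of `Real.cos` are shifted cosines. -/
lemma iteratedDeriv_cos_eq (i : ℕ) :
    iteratedDeriv i Real.cos = fun x => Real.cos (x + i * (Real.pi / 2)) := by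
  induction i with
  | zero => simp
  | succ i ih =>
    rw [iteratedDeriv_succ, ih]
    funext x
    have h1 : HasDerivAt (fun x : ℝ => Real.cos (x + i * (Real.pi / 2)))
        (-Real.sin (x + i * (Real.pi / 2))) x := by
      have h := (Real.hasDerivAt_cos (x + i * (Real.pi / 2))).comp x
        ((hasDerivAt_id x).add_const (i * (Real.pi / 2)))
      rw [mul_one] at h
      exact h
    rw [h1.deriv,
      show (x + (i + 1 : ℕ) * (Real.pi / 2)) = (x + i * (Real.pi / 2)) + Real.pi / 2 by
        push_cast; ring,
      Real.cos_add_pi_div_two]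

lemma iteratedDeriv_cos_bound (i : ℕ) (x : ℝ) : |iteratedDeriv i Real.cos x| ≤ 1 := by
  rw [iteratedDeriv_cos_eq]
  exact Real.abs_cos_le_one _

lemma bd_const (c : ℝ) (i : ℕ) (x : ℝ) : |iteratedDeriv i (fun _ : ℝ => c) x| ≤ |c| := by
  induction i generalizing c with
  | zero => simp
  | succ i ih =>
    rw [iteratedDeriv_succ', deriv_const']
    exact (ih 0).trans (by simpa using abs_nonneg c)

/-- bounded-derivatives class is stable under products. -/
lemma bd_mul {f g : ℝ → ℝ} (hf : ContDiff ℝ (⊤ : ℕ∞) f) (hg : ContDiff ℝ (⊤ : ℕ∞) g)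
    (hbf : ∀ i : ℕ, ∃ C, ∀ x, |iteratedDeriv i f x| ≤ C)
    (hbg : ∀ i : ℕ, ∃ C, ∀ x, |iteratedDeriv i g x| ≤ C) :
    ∀ i : ℕ, ∃ C, ∀ x, |iteratedDeriv i (fun x => f x * g x) x| ≤ C := by
  intro n
  choose Cf hCf using hbf
  choose Cg hCg using hbg
  refine ⟨∑ i ∈ Finset.range (n + 1), (n.choose i : ℝ) * Cf i * Cg (n - i), fun x => ?_⟩
  rw [← Real.norm_eq_abs, ← norm_iteratedFDeriv_eq_norm_iteratedDeriv]
  refine le_trans (norm_iteratedFDeriv_mul_le hf hg x (by exact_mod_cast le_top))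
    (Finset.sum_le_sum fun i _ => ?_)
  have h1 : ‖iteratedFDeriv ℝ i f x‖ ≤ Cf i := by
    rw [norm_iteratedFDeriv_eq_norm_iteratedDeriv, Real.norm_eq_abs]; exact hCf i x
  have h2 : ‖iteratedFDeriv ℝ (n - i) g x‖ ≤ Cg (n - i) := by
    rw [norm_iteratedFDeriv_eq_norm_iteratedDeriv, Real.norm_eq_abs]; exact hCg (n - i) x
  have h0f : 0 ≤ Cf i := (abs_nonneg _).trans (hCf i x)
  exact mul_le_mul (mul_le_mul le_rfl h1 (norm_nonneg _) (Nat.cast_nonneg _)) h2 (norm_nonneg _)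
    (mul_nonneg (Nat.cast_nonneg _) h0f)

lemma bd_pow {f : ℝ → ℝ} (hf : ContDiff ℝ (⊤ : ℕ∞) f)
    (hbf : ∀ i : ℕ, ∃ C, ∀ x, |iteratedDeriv i f x| ≤ C) (m : ℕ) :
    ∀ i : ℕ, ∃ C, ∀ x, |iteratedDeriv i (fun x => f x ^ m) x| ≤ C := by
  induction m with
  | zero =>
    intro i
    refine ⟨1, fun x => ?_⟩
    simp only [pow_zero]
    simpa using bd_const 1 i x
  | succ m ih =>
    have h1 := bd_mul hf (hf.pow m) hbf ih
    intro i
    obtain ⟨C, hC⟩ := h1 i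
    refine ⟨C, fun x => ?_⟩
    have : (fun x => f x ^ (m + 1)) = fun x => f x * f x ^ m := by
      funext x; ring
    rw [this]
    exact hC x

/-- Key real framework: smoothness and derivative bounds for `s ↦ ∫_0^b ρ(u) ψ(u s) du`. -/
lemma key {b M : ℝ} (hb0 : 0 < b) (hb1 : b ≤ 1) {ρ : ℝ → ℝ} (hρm : Measurable ρ)
    (hρ : ∀ u ∈ Set.Ioc (0:ℝ) b, |ρ u| ≤ M)
    {ψ : ℝ → ℝ} (hψ : ContDiff ℝ (⊤ : ℕ∞) ψ) {C : ℕ → ℝ}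
    (hC : ∀ (i : ℕ) (x : ℝ), |iteratedDeriv i ψ x| ≤ C i) :
    ContDiff ℝ (⊤ : ℕ∞) (fun s => ∫ u in (0:ℝ)..b, ρ u * ψ (u * s)) ∧
      ∀ (i : ℕ) (s : ℝ),
        |iteratedDeriv i (fun s => ∫ u in (0:ℝ)..b, ρ u * ψ (u * s)) s| ≤ M * C i * b := by
  have hM : 0 ≤ M := le_trans (abs_nonneg _) (hρ b ⟨hb0, le_refl b⟩)
  set g : ℕ → ℝ → ℝ := fun i s => ∫ u in (0:ℝ)..b, ρ u * iteratedDeriv i ψ (u * s) * u ^ i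
    with hgdef
  have hcont : ∀ i : ℕ, Continuous (iteratedDeriv i ψ) := fun i =>
    hψ.continuous_iteratedDeriv i (by exact_mod_cast le_top)
  have hdiff : ∀ (i : ℕ) (x : ℝ),
      HasDerivAt (iteratedDeriv i ψ) (iteratedDeriv (i + 1) ψ x) x := by
    intro i x
    have h0 : ContDiff ℝ ((i + 1 : ℕ) : WithTop ℕ∞) ψ := hψ.of_le (by exact_mod_cast le_top)
    have h1 : Differentiable ℝ (iteratedDeriv i ψ) :=
      h0.differentiable_iteratedDeriv i (Nat.cast_lt.mpr i.lt_succ_self)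
    rw [iteratedDeriv_succ]
    exact (h1 x).hasDerivAt
  have hmeas : ∀ (i : ℕ) (s : ℝ),
      AEStronglyMeasurable (fun u : ℝ => ρ u * iteratedDeriv i ψ (u * s) * u ^ i)
        (volume.restrict (Ι (0:ℝ) b)) := by
    intro i s
    exact ((hρm.mul ((hcont i).measurable.comp (measurable_id.mul_const s))).mul
      (measurable_id.pow_const i)).aestronglyMeasurable
  have hbound : ∀ (i : ℕ) (s : ℝ), ∀ u ∈ Ι (0:ℝ) b,
      ‖ρ u * iteratedDeriv i ψ (u * s) * u ^ i‖ ≤ M * C i := by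
    intro i s u hu
    rw [Set.uIoc_of_le hb0.le] at hu
    have h0u : 0 < u := hu.1
    have hub : u ≤ 1 := hu.2.trans hb1
    have h3 : |u ^ i| ≤ 1 := by
      rw [abs_pow]
      exact pow_le_one₀ (abs_nonneg u) (abs_le.2 ⟨by linarith, hub⟩)
    calc ‖ρ u * iteratedDeriv i ψ (u * s) * u ^ i‖
        = |ρ u| * |iteratedDeriv i ψ (u * s)| * |u ^ i| := by
          rw [Real.norm_eq_abs, abs_mul, abs_mul]
      _ ≤ M * C i * 1 := by
          refine mul_le_mul (mul_le_mul (hρ u hu) (hC i (u * s)) (abs_nonneg _) hM) h3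
            (abs_nonneg _) ?_
          exact mul_nonneg hM ((abs_nonneg _).trans (hC i (u * s)))
      _ = M * C i := by ring
  have hint : ∀ (i : ℕ) (s : ℝ),
      IntervalIntegrable (fun u => ρ u * iteratedDeriv i ψ (u * s) * u ^ i) volume 0 b := by
    intro i s
    refine (_root_.intervalIntegrable_const (c := M * C i)).mono_fun (hmeas i s) ?_
    filter_upwards [ae_restrict_mem measurableSet_uIoc] with u hu
    exact le_trans (hbound i s u hu) (le_abs_self _)
  have hder : ∀ (i : ℕ) (s₀ : ℝ), HasDerivAt (g i) (g (i + 1) s₀) s₀ := by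
    intro i s₀
    have h := intervalIntegral.hasDerivAt_integral_of_dominated_loc_of_deriv_le
      (F := fun s u => ρ u * iteratedDeriv i ψ (u * s) * u ^ i)
      (F' := fun s u => ρ u * iteratedDeriv (i + 1) ψ (u * s) * u ^ (i + 1))
      (bound := fun _ => M * C (i + 1)) (μ := volume) (a := 0) (b := b) (x₀ := s₀)
      (ball_mem_nhds _ one_pos) (Filter.Eventually.of_forall fun x => hmeas i x) (hint i s₀)
      (hmeas (i + 1) s₀)
      (Filter.Eventually.of_forall fun u hu x _ => hbound (i + 1) x u hu)
      _root_.intervalIntegrable_const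
      (Filter.Eventually.of_forall fun u hu x _ => ?_)
    · exact h.2
    · have h1 : HasDerivAt (fun s : ℝ => iteratedDeriv i ψ (u * s))
          (iteratedDeriv (i + 1) ψ (u * x) * u) x := by
        have h := (hdiff i (u * x)).comp x ((hasDerivAt_id x).const_mul u)
        simp only [mul_one, id_eq] at h
        exact h
      have h2 := (h1.const_mul (ρ u)).mul_const (u ^ i)
      convert h2 using 1
      exacts [rfl, by ring]
  have hcontg : ∀ i, Continuous (g i) := by
    intro i
    have : Differentiable ℝ (g i) := fun s => (hder i s).differentiableAt
    exact this.continuous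
  have hderiv_eq : ∀ i, deriv (g i) = g (i + 1) := fun i => funext fun s => (hder i s).deriv
  have hsmooth : ∀ (k : ℕ) (i : ℕ), ContDiff ℝ (k : WithTop ℕ∞) (g i) := by
    intro k
    induction k with
    | zero => intro i; exact contDiff_zero.mpr (hcontg i)
    | succ k ih =>
      intro i
      rw [show ((k + 1 : ℕ) : WithTop ℕ∞) = (k : WithTop ℕ∞) + 1 by push_cast; rfl]
      refine contDiff_succ_iff_deriv.mpr ⟨fun s => (hder i s).differentiableAt, ?_, ?_⟩
      · intro h; exact absurd h (by simp)
      · rw [hderiv_eq]; exact ih (i + 1)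
  have hg0 : (fun s => ∫ u in (0:ℝ)..b, ρ u * ψ (u * s)) = g 0 := by
    funext s
    simp [hgdef]
  have hiter : ∀ i, iteratedDeriv i (g 0) = g i := by
    intro i
    induction i with
    | zero => simp
    | succ i ih => rw [iteratedDeriv_succ, ih, hderiv_eq]
  constructor
  · rw [hg0]
    exact contDiff_infty.mpr fun k => hsmooth k 0
  · intro i s
    rw [hg0, hiter i]
    have h := intervalIntegral.norm_integral_le_of_norm_le_const (C := M * C i)
      (f := fun u => ρ u * iteratedDeriv i ψ (u * s) * u ^ i) (a := 0) (b := b)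
      (hbound i s)
    rw [Real.norm_eq_abs] at h
    calc |g i s| ≤ M * C i * |b - 0| := h
      _ = M * C i * b := by rw [sub_zero, abs_of_pos hb0]

/-- entire functions have continuous derivative. -/
lemma entire_deriv_cont {F : ℂ → ℂ} (hF : Differentiable ℂ F) : Continuous (deriv F) := by
  have h1 : AnalyticOnNhd ℂ F Set.univ := hF.differentiableOn.analyticOnNhd isOpen_univ
  have h2 := h1.deriv
  rw [← continuousOn_univ]
  exact h2.continuousOn

/-- Complex framework: differentiability of `z ↦ ∫_0^b ρ(u) Ψ(u z) du`. -/
lemma keyC {b M : ℝ} (hb0 : 0 < b) (hb1 : b ≤ 1) {ρ : ℝ → ℝ} (hρm : Measurable ρ)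
    (hρ : ∀ u ∈ Set.Ioc (0:ℝ) b, |ρ u| ≤ M)
    {Ψ : ℂ → ℂ} (hΨ : Differentiable ℂ Ψ) (hΨc : Continuous (deriv Ψ)) :
    Differentiable ℂ (fun z => ∫ u in (0:ℝ)..b, (ρ u : ℂ) * Ψ ((u : ℂ) * z)) := by
  intro z₀
  have hM : 0 ≤ M := le_trans (abs_nonneg _) (hρ b ⟨hb0, le_refl b⟩)
  obtain ⟨C₁, hC₁⟩ : ∃ C₁, ∀ w ∈ Metric.closedBall (0:ℂ) (‖z₀‖ + 1), ‖deriv Ψ w‖ ≤ C₁ :=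
    (isCompact_closedBall (0:ℂ) (‖z₀‖ + 1)).exists_bound_of_continuousOn hΨc.continuousOn
  obtain ⟨C₀, hC₀⟩ : ∃ C₀, ∀ w ∈ Metric.closedBall (0:ℂ) (‖z₀‖ + 1), ‖Ψ w‖ ≤ C₀ :=
    (isCompact_closedBall (0:ℂ) (‖z₀‖ + 1)).exists_bound_of_continuousOn
      hΨ.continuous.continuousOn
  have hmem : ∀ u ∈ Ι (0:ℝ) b, ∀ x ∈ Metric.ball z₀ 1,
      ((u : ℂ) * x) ∈ Metric.closedBall (0:ℂ) (‖z₀‖ + 1) := by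
    intro u hu x hx
    rw [Set.uIoc_of_le hb0.le] at hu
    rw [mem_closedBall_zero_iff, norm_mul, Complex.norm_real, Real.norm_eq_abs,
      abs_of_pos hu.1]
    have hxn : ‖x‖ ≤ ‖z₀‖ + 1 := by
      have h' := mem_ball_iff_norm.mp hx
      calc ‖x‖ = ‖z₀ + (x - z₀)‖ := by ring_nf
        _ ≤ ‖z₀‖ + ‖x - z₀‖ := norm_add_le _ _
        _ ≤ ‖z₀‖ + 1 := by linarith
    have hu1 : u ≤ 1 := hu.2.trans hb1
    calc u * ‖x‖ ≤ 1 * (‖z₀‖ + 1) := by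
          apply mul_le_mul hu1 hxn (norm_nonneg _) zero_le_one
      _ = ‖z₀‖ + 1 := one_mul _
  have hmeas : ∀ x : ℂ, AEStronglyMeasurable (fun u : ℝ => (ρ u : ℂ) * Ψ ((u:ℂ) * x))
      (volume.restrict (Ι (0:ℝ) b)) := fun x =>
    ((Complex.measurable_ofReal.comp hρm).mul
      (hΨ.continuous.measurable.comp (Complex.measurable_ofReal.mul_const x))).aestronglyMeasurable
  have habs : ∀ u ∈ Ι (0:ℝ) b, |ρ u| ≤ M := by
    intro u hu; rw [Set.uIoc_of_le hb0.le] at hu; exact hρ u hu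
  have hu_le_one : ∀ u ∈ Ι (0:ℝ) b, |u| ≤ 1 := by
    intro u hu; rw [Set.uIoc_of_le hb0.le] at hu
    exact abs_le.2 ⟨by linarith [hu.1], hu.2.trans hb1⟩
  have h := intervalIntegral.hasDerivAt_integral_of_dominated_loc_of_deriv_le
    (F := fun z u => (ρ u : ℂ) * Ψ ((u:ℂ) * z))
    (F' := fun z u => (ρ u : ℂ) * (deriv Ψ ((u:ℂ) * z) * (u:ℂ)))
    (bound := fun _ => M * C₁) (μ := volume) (a := 0) (b := b) (x₀ := z₀)
    (ball_mem_nhds _ one_pos) (Filter.Eventually.of_forall fun x => hmeas x) ?_ ?_ ?_ _root_.intervalIntegrable_const ?_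
  · exact h.2.differentiableAt
  · -- integrability of F z₀
    refine (_root_.intervalIntegrable_const (c := M * C₀)).mono_fun (hmeas z₀) ?_
    filter_upwards [ae_restrict_mem measurableSet_uIoc] with u hu
    have hz₀ : z₀ ∈ Metric.ball z₀ 1 := mem_ball_self one_pos
    have h1 : ‖(ρ u : ℂ) * Ψ ((u:ℂ) * z₀)‖ ≤ M * C₀ := by
      rw [norm_mul, Complex.norm_real, Real.norm_eq_abs]
      exact mul_le_mul (habs u hu) (hC₀ _ (hmem u hu z₀ hz₀)) (norm_nonneg _) hM
    exact h1.trans (le_abs_self _)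
  · exact ((Complex.measurable_ofReal.comp hρm).mul
      ((hΨc.measurable.comp (Complex.measurable_ofReal.mul_const z₀)).mul
        Complex.measurable_ofReal)).aestronglyMeasurable
  · refine Filter.Eventually.of_forall fun u hu x hx => ?_
    rw [norm_mul, norm_mul, Complex.norm_real, Real.norm_eq_abs, Complex.norm_real,
      Real.norm_eq_abs]
    calc |ρ u| * (‖deriv Ψ ((u:ℂ) * x)‖ * |u|) ≤ M * (C₁ * 1) := by
          apply mul_le_mul (habs u hu) ?_ (by positivity) hM
          exact mul_le_mul (hC₁ _ (hmem u hu x hx)) (hu_le_one u hu) (abs_nonneg _)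
            ((norm_nonneg _).trans (hC₁ _ (hmem u hu x hx)))
      _ = M * C₁ := by ring
  · refine Filter.Eventually.of_forall fun u hu x _ => ?_
    have h1 : HasDerivAt (fun z : ℂ => Ψ ((u:ℂ) * z)) (deriv Ψ ((u:ℂ) * x) * (u:ℂ)) x := by
      have h := ((hΨ ((u:ℂ) * x)).hasDerivAt.comp x ((hasDerivAt_id x).const_mul (u:ℂ)))
      simp only [mul_one, id_eq] at h
      exact h
    exact h1.const_mul ((ρ u : ℂ))

noncomputable def AFn (n ℓ : ℕ) (s : ℝ) : ℝ :=
  (∫ u in (0:ℝ)..1, (1 - u ^ 2) ^ (((n : ℝ) - 1) / 2))⁻¹ * ((4 : ℝ) ^ ℓ / ((2 * ℓ).choose ℓ : ℝ)) *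
    ∫ u in (0:ℝ)..1, (1 - u ^ 2) ^ (((n : ℝ) - 1) / 2) * Real.sin (u * s / 2) ^ (2 * ℓ)

/-- For every dimension `n ≥ 1` and positive integer `ℓ`, the function `s ↦ A_ℓ(s)/s^{2ℓ}`
(defined for `s ≠ 0`) extends to a `C^∞` function `g` on all of `ℝ`, and for every `i ∈ ℕ`
the `i`-th derivative of `g` is bounded on `ℝ`. -/
theorem stmt4 (n : ℕ) (hn : 1 ≤ n) (ℓ : ℕ) (hℓ : 0 < ℓ) :
    ∃ g : ℝ → ℝ, ContDiff ℝ (⊤ : ℕ∞) g ∧ (∀ s : ℝ, s ≠ 0 → g s = AFn n ℓ s / s ^ (2 * ℓ)) ∧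
      ∀ i : ℕ, ∃ C : ℝ, ∀ s : ℝ, |iteratedDeriv i g s| ≤ C := by
  have hn' : (1 : ℝ) ≤ (n : ℝ) := by exact_mod_cast hn
  have hr : 0 ≤ ((n : ℝ) - 1) / 2 := by linarith
  have h2ℓ : 2 * ℓ ≠ 0 := Nat.mul_ne_zero two_ne_zero hℓ.ne'
  set w : ℝ → ℝ := fun u => (1 - u ^ 2) ^ (((n : ℝ) - 1) / 2) with hw
  set c : ℝ := (∫ u in (0:ℝ)..1, w u)⁻¹ * ((4 : ℝ) ^ ℓ / ((2 * ℓ).choose ℓ : ℝ)) with hc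
  set ρ : ℝ → ℝ := fun u => c * (w u * (u / 2) ^ (2 * ℓ)) with hρdef
  set S₂ : ℝ → ℝ := fun s => ∫ v in (0:ℝ)..(1/2), 2 * Real.cos (v * s) with hS₂def
  set ψ : ℝ → ℝ := fun x => S₂ x ^ (2 * ℓ) with hψdef
  -- basic facts about `w` and `ρ`
  have hwcont : Continuous w :=
    (Real.continuous_rpow_const hr).comp (continuous_const.sub (continuous_pow 2))
  have hwle : ∀ u ∈ Set.Ioc (0:ℝ) 1, |w u| ≤ 1 := by
    intro u hu
    have h0 : 0 ≤ 1 - u ^ 2 := by nlinarith [hu.1, hu.2]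
    have h1 : 1 - u ^ 2 ≤ 1 := by nlinarith [hu.1]
    rw [hw, abs_of_nonneg (Real.rpow_nonneg h0 _)]
    exact Real.rpow_le_one h0 h1 hr
  have hρcont : Continuous ρ :=
    continuous_const.mul (hwcont.mul ((continuous_id.div_const 2).pow (2 * ℓ)))
  have hρm : Measurable ρ := hρcont.measurable
  have hρle : ∀ u ∈ Set.Ioc (0:ℝ) 1, |ρ u| ≤ |c| := by
    intro u hu
    rw [hρdef]
    simp only [abs_mul, abs_pow]
    have hud : |u / 2| ≤ 1 := by rw [abs_div]; rw [abs_of_pos hu.1]; simp; linarith [hu.2]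
    calc |c| * (|w u| * |u / 2| ^ (2 * ℓ)) ≤ |c| * (1 * 1) := by
          refine mul_le_mul le_rfl ?_ (by positivity) (abs_nonneg c)
          exact mul_le_mul (hwle u hu) (pow_le_one₀ (abs_nonneg _) hud) (by positivity)
            zero_le_one
      _ = |c| := by ring
  -- `S₂` via the real framework
  have hkey1 := key (b := 1/2) (M := 2) (ρ := fun _ => (2:ℝ)) (ψ := Real.cos)
    (C := fun _ => 1) (by norm_num) (by norm_num) measurable_const
    (fun u _ => by norm_num) Real.contDiff_cos iteratedDeriv_cos_bound
  have hS₂smooth : ContDiff ℝ (⊤ : ℕ∞) S₂ := hkey1.1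
  have hS₂bd : ∀ (i : ℕ) (x : ℝ), |iteratedDeriv i S₂ x| ≤ 2 * 1 * (1/2) := hkey1.2
  have hψsm : ContDiff ℝ (⊤ : ℕ∞) ψ := hS₂smooth.pow _
  have hψbd : ∀ i : ℕ, ∃ C, ∀ x, |iteratedDeriv i ψ x| ≤ C :=
    bd_pow hS₂smooth (fun i => ⟨1, fun x => by simpa using hS₂bd i x⟩) (2 * ℓ)
  choose Cψ hCψ using hψbd
  -- the main real function
  have hkey2 := key (b := 1) (M := |c|) one_pos le_rfl hρm hρle hψsm hCψ
  -- complex side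
  set S₂ℂ : ℂ → ℂ := fun z => ∫ v in (0:ℝ)..(1/2), ((2:ℝ) : ℂ) * Complex.cos ((v:ℂ) * z)
    with hS₂ℂdef
  have hS₂ℂdiff : Differentiable ℂ S₂ℂ :=
    keyC (b := 1/2) (M := 2) (ρ := fun _ => (2:ℝ)) (Ψ := Complex.cos) (by norm_num)
      (by norm_num) measurable_const (fun u _ => by norm_num) Complex.differentiable_cos
      (entire_deriv_cont Complex.differentiable_cos)
  set Ψc : ℂ → ℂ := fun z => S₂ℂ z ^ (2 * ℓ) with hΨcdef
  have hΨdiff : Differentiable ℂ Ψc := hS₂ℂdiff.pow _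
  have hΨc : Continuous (deriv Ψc) := entire_deriv_cont hΨdiff
  set G : ℂ → ℂ := fun z => ∫ u in (0:ℝ)..1, ((ρ u : ℝ) : ℂ) * Ψc ((u:ℂ) * z) with hGdef
  have hGdiff : Differentiable ℂ G := keyC one_pos le_rfl hρm hρle hΨdiff hΨc
  set g : ℝ → ℝ := fun s => (G (s : ℂ)).re with hgdef
  -- analyticity of `g`
  have hGanal : AnalyticOnNhd ℂ G Set.univ := hGdiff.differentiableOn.analyticOnNhd isOpen_univ
  have h1 : AnalyticOnNhd ℝ G Set.univ := hGanal.restrictScalars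
  have h2 : AnalyticOnNhd ℝ (G ∘ Complex.ofRealCLM) Set.univ :=
    h1.comp (Complex.ofRealCLM.analyticOnNhd Set.univ) (Set.mapsTo_univ _ _)
  have h3 : AnalyticOnNhd ℝ (Complex.reCLM ∘ (G ∘ Complex.ofRealCLM)) Set.univ :=
    (Complex.reCLM.analyticOnNhd Set.univ).comp h2 (Set.mapsTo_univ _ _)
  have hganal : AnalyticOnNhd ℝ g Set.univ := h3
  have hContg : ContDiff ℝ (⊤ : ℕ∞) g := hganal.contDiff
  -- `g` agrees with the real parametric integral
  have hS₂c : ∀ x : ℝ, S₂ℂ (x : ℂ) = ((S₂ x : ℝ) : ℂ) := by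
    intro x
    calc S₂ℂ (x : ℂ) = ∫ v in (0:ℝ)..(1/2), ((2 * Real.cos (v * x) : ℝ) : ℂ) :=
          intervalIntegral.integral_congr fun v _ => by
            push_cast [Complex.ofReal_cos]; ring
      _ = ((S₂ x : ℝ) : ℂ) := intervalIntegral.integral_ofReal
  have hgr : g = fun s => ∫ u in (0:ℝ)..1, ρ u * ψ (u * s) := by
    funext s
    have hGs : G (s : ℂ) = ((∫ u in (0:ℝ)..1, ρ u * ψ (u * s) : ℝ) : ℂ) := by
      calc G (s : ℂ) = ∫ u in (0:ℝ)..1, ((ρ u * ψ (u * s) : ℝ) : ℂ) := by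
            refine intervalIntegral.integral_congr fun u _ => ?_
            show ((ρ u : ℝ) : ℂ) * Ψc ((u:ℂ) * (s:ℂ)) = _
            rw [show ((u:ℂ) * (s:ℂ)) = ((u * s : ℝ) : ℂ) by push_cast; ring]
            simp only [hΨcdef, hψdef]
            rw [hS₂c (u * s)]
            push_cast
            ring
        _ = ((∫ u in (0:ℝ)..1, ρ u * ψ (u * s) : ℝ) : ℂ) := intervalIntegral.integral_ofReal
    rw [hgdef]
    simp only [hGs, Complex.ofReal_re]
  -- value of `S₂`
  have hS₂val : ∀ t : ℝ, t ≠ 0 → S₂ t = 2 * (t⁻¹ * Real.sin (t / 2)) := by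
    intro t ht
    have h1 : (∫ v in (0:ℝ)..(1/2), Real.cos (v * t)) = t⁻¹ * Real.sin (t / 2) := by
      rw [integral_comp_mul_right Real.cos ht, show (0:ℝ) * t = 0 by ring,
        show (1/2 : ℝ) * t = t / 2 by ring, integral_cos]
      simp [smul_eq_mul]
    calc S₂ t = ∫ v in (0:ℝ)..(1/2), 2 * Real.cos (v * t) := rfl
      _ = 2 * ∫ v in (0:ℝ)..(1/2), Real.cos (v * t) := intervalIntegral.integral_const_mul _ _
      _ = 2 * (t⁻¹ * Real.sin (t / 2)) := by rw [h1]
  refine ⟨g, hContg, ?_, ?_⟩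
  · -- equality with `AFn` away from 0
    intro s hs
    have hpt : ∀ u ∈ Set.uIcc (0:ℝ) 1,
        ρ u * ψ (u * s) = (c / s ^ (2 * ℓ)) * (w u * Real.sin (u * s / 2) ^ (2 * ℓ)) := by
      intro u _
      by_cases hu : u = 0
      · simp [hρdef, hψdef, hu, zero_pow h2ℓ]
      · have hus : u * s ≠ 0 := mul_ne_zero hu hs
        rw [hρdef, hψdef]
        simp only
        rw [hS₂val (u * s) hus]
        rw [show u * s / 2 = u * s / 2 from rfl]
        have h : (u / 2) * (2 * ((u * s)⁻¹ * Real.sin (u * s / 2))) = s⁻¹ * Real.sin (u * s / 2) := by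
          field_simp
        calc _ = c * w u * ((u / 2) ^ (2 * ℓ) * (2 * ((u * s)⁻¹ * Real.sin (u * s / 2))) ^ (2 * ℓ)) := by ring
          _ = _ := by rw [← mul_pow, h]; ring
    have hAFn : AFn n ℓ s = c * ∫ u in (0:ℝ)..1, w u * Real.sin (u * s / 2) ^ (2 * ℓ) := rfl
    calc g s = ∫ u in (0:ℝ)..1, ρ u * ψ (u * s) := by rw [hgr]
      _ = ∫ u in (0:ℝ)..1, (c / s ^ (2 * ℓ)) * (w u * Real.sin (u * s / 2) ^ (2 * ℓ)) :=
          intervalIntegral.integral_congr hpt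
      _ = (c / s ^ (2 * ℓ)) * ∫ u in (0:ℝ)..1, w u * Real.sin (u * s / 2) ^ (2 * ℓ) :=
          intervalIntegral.integral_const_mul _ _
      _ = AFn n ℓ s / s ^ (2 * ℓ) := by rw [hAFn]; ring
  · -- derivative bounds
    intro i
    refine ⟨|c| * Cψ i * 1, fun s => ?_⟩
    rw [hgr]
    exact hkey2.2 i s
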